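/- Eigenfunctions of the nabla Riemann–Liouville discrete fractional Sturm–Liouville equation corresponding to distinct eigenvalues are orthogonal with respect to the weight r: if L₁u(t) = λ_α r(t)u(t) and L₁v(t) = λ_β r(t)v(t) hold for all t with a+1 ≤ t ≤ b−1, and λ_α ≠ λ_β, then ∑_{s=a+1}^{b-1} r(s)u(s)v(s) = 0. -/

import Mathlib

/-- Rising factorial `t^{overline α} = Γ(t+α)/Γ(t)`. -/
noncomputable def risingFac (t α : ℝ) : ℝ := Real.Gamma (t + α) / Real.Gamma t

/-- Nabla left Riemann–Liouville fractional difference of order `μ`. -/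
noncomputable def nablaLeftRL (μ : ℝ) (a : ℤ) (x : ℤ → ℝ) (t : ℤ) : ℝ :=
  (1 / Real.Gamma (1 - μ)) *
      ∑ s ∈ Finset.Icc (a + 1) t, risingFac ((t - (s - 1) : ℤ) : ℝ) (-μ) * x s -
    (1 / Real.Gamma (1 - μ)) *
      ∑ s ∈ Finset.Icc (a + 1) (t - 1), risingFac (((t - 1) - (s - 1) : ℤ) : ℝ) (-μ) * x s

/-- Nabla right Riemann–Liouville fractional difference of order `μ`. -/
noncomputable def nablaRightRL (μ : ℝ) (b : ℤ) (x : ℤ → ℝ) (t : ℤ) : ℝ :=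
  -((1 / Real.Gamma (1 - μ)) *
        ∑ s ∈ Finset.Icc (t + 1) (b - 1), risingFac ((s - ((t + 1) - 1) : ℤ) : ℝ) (-μ) * x s -
      (1 / Real.Gamma (1 - μ)) *
        ∑ s ∈ Finset.Icc t (b - 1), risingFac ((s - (t - 1) : ℤ) : ℝ) (-μ) * x s)

/-- The discrete fractional Sturm–Liouville operator `L₁`. -/
noncomputable def L1 (μ : ℝ) (a b : ℤ) (p q : ℤ → ℝ) (x : ℤ → ℝ) (t : ℤ) : ℝ :=
  nablaLeftRL μ a (fun τ => p τ * nablaRightRL μ b x τ) t + q t * x t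

/-! The right R–L difference is the adjoint of the left one for the plain inner product on
`[a+1, b-1]`: both are differences of sums against the same kernel `n ↦ (n+1)^{\overline{-μ}}`,
and exchanging the order of summation over the triangle `a+1 ≤ s ≤ t ≤ b-1` turns one into the
other. Hence `∑ (v · L₁u - u · L₁v) = 0`, while the eigenvalue equations make this sum equal to
`(λ_α - λ_β) ∑ r u v`. -/

open Finset

theorem Finset.sum_Icc_sum_Icc_sub_comm {M : Type*} [AddCommMonoid M] {m n d : ℤ} (hd : 0 ≤ d)
    (f : ℤ → ℤ → M) :
    ∑ t ∈ Icc m n, ∑ s ∈ Icc m (t - d), f t s = ∑ s ∈ Icc m n, ∑ t ∈ Icc (s + d) n, f t s :=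
  sum_comm' (by intro t s; simp only [mem_Icc]; omega)

/-- For `w = nablaRLKernel μ` this is the nabla left fractional sum of order `1-μ`. -/
noncomputable def leftKernelSum (w : ℤ → ℝ) (a : ℤ) (g : ℤ → ℝ) (t : ℤ) : ℝ :=
  ∑ s ∈ Icc (a + 1) t, w (t - s) * g s

noncomputable def rightKernelSum (w : ℤ → ℝ) (b : ℤ) (f : ℤ → ℝ) (t : ℤ) : ℝ :=
  ∑ s ∈ Icc t (b - 1), w (s - t) * f s

theorem sum_mul_leftKernelSum_sub (w : ℤ → ℝ) (a b d : ℤ) (hd : 0 ≤ d) (f g : ℤ → ℝ) :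
    ∑ t ∈ Icc (a + 1) (b - 1), f t * leftKernelSum w a g (t - d) =
      ∑ s ∈ Icc (a + 1) (b - 1), g s * rightKernelSum w b f (s + d) := by
  simp only [leftKernelSum, rightKernelSum, mul_sum]
  rw [sum_Icc_sum_Icc_sub_comm hd]
  refine sum_congr rfl fun s _ => sum_congr rfl fun t _ => ?_
  rw [show t - d - s = t - (s + d) by ring]
  ring

noncomputable def nablaRLKernel (μ : ℝ) (n : ℤ) : ℝ :=
  1 / Real.Gamma (1 - μ) * risingFac ((n + 1 : ℤ) : ℝ) (-μ)

theorem nablaLeftRL_eq (μ : ℝ) (a : ℤ) (x : ℤ → ℝ) (t : ℤ) :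
    nablaLeftRL μ a x t =
      leftKernelSum (nablaRLKernel μ) a x t - leftKernelSum (nablaRLKernel μ) a x (t - 1) := by
  simp only [nablaLeftRL, leftKernelSum, nablaRLKernel, mul_sum, mul_assoc]
  congr 1 <;> refine sum_congr rfl fun s _ => ?_ <;> ring_nf

theorem nablaRightRL_eq (μ : ℝ) (b : ℤ) (x : ℤ → ℝ) (t : ℤ) :
    nablaRightRL μ b x t =
      rightKernelSum (nablaRLKernel μ) b x t - rightKernelSum (nablaRLKernel μ) b x (t + 1) := by
  simp only [nablaRightRL, rightKernelSum, nablaRLKernel, mul_sum, mul_assoc, neg_sub]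
  congr 1 <;> refine sum_congr rfl fun s _ => ?_ <;> ring_nf

theorem sum_mul_nablaLeftRL (μ : ℝ) (a b : ℤ) (f g : ℤ → ℝ) :
    ∑ t ∈ Icc (a + 1) (b - 1), f t * nablaLeftRL μ a g t =
      ∑ t ∈ Icc (a + 1) (b - 1), g t * nablaRightRL μ b f t := by
  have hfirst := sum_mul_leftKernelSum_sub (nablaRLKernel μ) a b 0 le_rfl f g
  have hsecond := sum_mul_leftKernelSum_sub (nablaRLKernel μ) a b 1 zero_le_one f g
  simp only [sub_zero, add_zero] at hfirst
  simp only [nablaLeftRL_eq, nablaRightRL_eq, mul_sub, sum_sub_distrib, hfirst, hsecond]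

theorem sum_mul_L1_sub_mul_L1 (μ : ℝ) (a b : ℤ) (p q u v : ℤ → ℝ) :
    ∑ t ∈ Icc (a + 1) (b - 1), (v t * L1 μ a b p q u t - u t * L1 μ a b p q v t) = 0 := by
  simp only [L1, mul_add, add_sub_add_comm, sum_add_distrib, sum_sub_distrib,
    sum_mul_nablaLeftRL μ a b]
  rw [← sum_sub_distrib, ← sum_sub_distrib, ← sum_add_distrib]
  exact sum_eq_zero fun t _ => by ring

theorem L1_eigenfunctions_orthogonal_general (μ : ℝ)
    (a b : ℤ) (p q r : ℤ → ℝ)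
    (u v : ℤ → ℝ) (lα lβ : ℝ) (hαβ : lα ≠ lβ)
    (hu : ∀ t ∈ Finset.Icc (a + 1) (b - 1), L1 μ a b p q u t = lα * (r t * u t))
    (hv : ∀ t ∈ Finset.Icc (a + 1) (b - 1), L1 μ a b p q v t = lβ * (r t * v t)) :
    ∑ s ∈ Finset.Icc (a + 1) (b - 1), r s * u s * v s = 0 := by
  have hgreen : (lα - lβ) * ∑ s ∈ Icc (a + 1) (b - 1), r s * u s * v s = 0 := by
    rw [← sum_mul_L1_sub_mul_L1 μ a b p q u v, mul_sum]
    exact sum_congr rfl fun t ht => by rw [hu t ht, hv t ht]; ring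
  exact (mul_eq_zero.mp hgreen).resolve_left (sub_ne_zero.mpr hαβ)

/-- Eigenfunctions of the nabla R-L DFSL equation corresponding to distinct
eigenvalues are orthogonal with respect to the weight `r`. -/
theorem L1_eigenfunctions_orthogonal (μ : ℝ) (hμ0 : 0 < μ) (hμ1 : μ < 1)
    (a b : ℤ) (hab : a < b) (p q r : ℤ → ℝ) (hp : ∀ t, 0 < p t) (hr : ∀ t, 0 < r t)
    (u v : ℤ → ℝ) (lα lβ : ℝ) (hαβ : lα ≠ lβ)
    (hu : ∀ t ∈ Finset.Icc (a + 1) (b - 1), L1 μ a b p q u t = lα * (r t * u t))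
    (hv : ∀ t ∈ Finset.Icc (a + 1) (b - 1), L1 μ a b p q v t = lβ * (r t * v t)) :
    ∑ s ∈ Finset.Icc (a + 1) (b - 1), r s * u s * v s = 0 :=
  L1_eigenfunctions_orthogonal_general μ a b p q r u v lα lβ hαβ hu hv
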